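/- Let G be a finite simple connected graph with n vertices and let 0 < p ≤ 1. Then (1 + (n-1)/n^p)^{1/p} ≤ ‖M_G‖_p ≤ (1 + (n-1)/2^p)^{1/p}. -/
import Mathlib


open scoped Classical
open Finset

noncomputable section

variable {V : Type*} [Fintype V]

/-- metric ball of radius `r` centered at `v` in the graph `G` -/
def gBall (G : SimpleGraph V) (v : V) (r : ℕ) : Finset V :=
  Finset.univ.filter fun w => G.dist v w ≤ r

/-- Hardy–Littlewood maximal operator on the graph `G` -/
def maxOp (G : SimpleGraph V) (f : V → ℝ) (v : V) : ℝ :=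
  ⨆ k : Fin (Fintype.card V), (∑ w ∈ gBall G v k.1, |f w|) / ((gBall G v k.1).card : ℝ)

/-- ℓ^p (quasi)norm of a function on the vertices -/
def pNorm (p : ℝ) (f : V → ℝ) : ℝ := (∑ v, |f v| ^ p) ^ (1 / p)

/-- operator (quasi)norm of the maximal operator of `G` on ℓ^p -/
def opNorm (G : SimpleGraph V) (p : ℝ) : ℝ :=
  ⨆ f : {f : V → ℝ // f ≠ 0}, pNorm p (maxOp G f.1) / pNorm p f.1

/-- weak ℓ^p norm -/
def wNorm (p : ℝ) (f : V → ℝ) : ℝ :=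
  ⨆ t : {t : ℝ // 0 < t},
    t.1 * ((Finset.univ.filter fun v => t.1 < |f v|).card : ℝ) ^ (1 / p)

/-- weak-type operator norm of the maximal operator of `G` -/
def wOpNorm (G : SimpleGraph V) (p : ℝ) : ℝ :=
  ⨆ f : {f : V → ℝ // f ≠ 0}, wNorm p (maxOp G f.1) / pNorm p f.1

/-- maximal operator over all graphs on `V` isomorphic to `G` -/
def maxOpIso (G : SimpleGraph V) (f : V → ℝ) (j : V) : ℝ :=
  ⨆ H : {H : SimpleGraph V // Nonempty (H ≃g G)}, maxOp H.1 f j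

/-- operator norm of `maxOpIso` on ℓ^p -/
def opNormIso (G : SimpleGraph V) (p : ℝ) : ℝ :=
  ⨆ f : {f : V → ℝ // f ≠ 0}, pNorm p (maxOpIso G f.1) / pNorm p f.1

/-- Kronecker delta at `k` -/
def kdelta (k : V) : V → ℝ := fun j => if j = k then 1 else 0

/-- star graph on `Fin n` with center `0` -/
def starGraph (n : ℕ) : SimpleGraph (Fin n) :=
  SimpleGraph.fromRel fun i _ => i.1 = 0

/-- diameter of a graph -/
def gDiam (G : SimpleGraph V) : ℕ :=
  Finset.univ.sup fun p : V × V => G.dist p.1 p.2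

/-- dilation index of a graph -/
def dilIndex (G : SimpleGraph V) : ℝ :=
  ⨆ x : V, ⨆ r : {r : ℕ // r ≤ gDiam G},
    ((gBall G x (3 * r.1)).card : ℝ) / ((gBall G x r.1).card : ℝ)

/-- overlapping index of a graph -/
def overlapIndex (G : SimpleGraph V) : ℕ :=
  sInf { r : ℕ | ∀ J : Finset (V × ℕ), ∃ I ⊆ J,
    J.biUnion (fun j => gBall G j.1 j.2) = I.biUnion (fun i => gBall G i.1 i.2) ∧
    ∀ v : V, (I.filter fun i => v ∈ gBall G i.1 i.2).card ≤ r }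

-- helpers
lemma real_rpow_add_le {p : ℝ} (hp : 0 ≤ p) (hp1 : p ≤ 1) {a b : ℝ} (ha : 0 ≤ a) (hb : 0 ≤ b) :
    (a + b) ^ p ≤ a ^ p + b ^ p := by
  have h := NNReal.rpow_add_le_add_rpow a.toNNReal b.toNNReal hp hp1
  have h2 := NNReal.coe_le_coe.2 h
  simpa [← Real.toNNReal_add ha hb, NNReal.coe_rpow, Real.coe_toNNReal _ ha,
    Real.coe_toNNReal _ hb, Real.coe_toNNReal _ (add_nonneg ha hb)] using h2

lemma rpow_sum_le_sum_rpow {p : ℝ} (hp0 : 0 < p) (hp1 : p ≤ 1) {α : Type*} (s : Finset α)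
    (f : α → ℝ) (hf : ∀ a ∈ s, 0 ≤ f a) :
    (∑ a ∈ s, f a) ^ p ≤ ∑ a ∈ s, f a ^ p := by
  induction s using Finset.cons_induction with
  | empty => simp [Real.zero_rpow hp0.ne']
  | cons a s ha ih =>
    rw [Finset.sum_cons, Finset.sum_cons]
    have hfa := hf a (Finset.mem_cons_self a s)
    have hs : 0 ≤ ∑ x ∈ s, f x :=
      Finset.sum_nonneg fun x hx => hf x (Finset.mem_cons_of_mem hx)
    calc (f a + ∑ x ∈ s, f x) ^ p ≤ f a ^ p + (∑ x ∈ s, f x) ^ p :=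
          real_rpow_add_le hp0.le hp1 hfa hs
      _ ≤ f a ^ p + ∑ x ∈ s, f x ^ p := by
          gcongr
          exact ih fun x hx => hf x (Finset.mem_cons_of_mem hx)

lemma mem_gBall_self (G : SimpleGraph V) (v : V) (r : ℕ) : v ∈ gBall G v r := by
  simp [gBall, SimpleGraph.dist_self]

lemma gBall_card_pos (G : SimpleGraph V) (v : V) (r : ℕ) : 0 < (gBall G v r).card :=
  Finset.card_pos.mpr ⟨v, mem_gBall_self G v r⟩

lemma maxOp_le_aux [Nonempty V] {p : ℝ} (hp0 : 0 < p) (hp1 : p ≤ 1)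
    (G : SimpleGraph V) (f : V → ℝ) (v : V) :
    maxOp G f v ≤ (|f v| ^ p + (∑ w ∈ Finset.univ.erase v, |f w| ^ p) / 2 ^ p) ^ (1 / p) := by
  have h2p : (0:ℝ) < 2 ^ p := Real.rpow_pos_of_pos (by norm_num) p
  have hS : 0 ≤ ∑ w ∈ Finset.univ.erase v, |f w| ^ p :=
    Finset.sum_nonneg fun w _ => Real.rpow_nonneg (abs_nonneg _) p
  have hX : 0 ≤ |f v| ^ p + (∑ w ∈ Finset.univ.erase v, |f w| ^ p) / 2 ^ p :=
    add_nonneg (Real.rpow_nonneg (abs_nonneg _) p) (div_nonneg hS h2p.le)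
  have hcard : 0 < Fintype.card V := Fintype.card_pos
  apply ciSup_le
  intro k
  set B := gBall G v k.1 with hB
  have hvB : v ∈ B := mem_gBall_self G v k.1
  have hc0 : (0:ℝ) < (B.card : ℝ) := by exact_mod_cast gBall_card_pos G v k.1
  set c : ℝ := (B.card : ℝ)
  have havg : 0 ≤ (∑ w ∈ B, |f w|) / c :=
    div_nonneg (Finset.sum_nonneg fun w _ => abs_nonneg _) hc0.le
  -- show avg ^ p ≤ X then conclude
  have key : ((∑ w ∈ B, |f w|) / c) ^ p
      ≤ |f v| ^ p + (∑ w ∈ Finset.univ.erase v, |f w| ^ p) / 2 ^ p := by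
    rw [Finset.sum_div]
    calc (∑ w ∈ B, |f w| / c) ^ p ≤ ∑ w ∈ B, (|f w| / c) ^ p :=
          rpow_sum_le_sum_rpow hp0 hp1 B _ (fun w _ => div_nonneg (abs_nonneg _) hc0.le)
      _ = (|f v| / c) ^ p + ∑ w ∈ B.erase v, (|f w| / c) ^ p :=
          (Finset.add_sum_erase B _ hvB).symm
      _ ≤ |f v| ^ p + (∑ w ∈ Finset.univ.erase v, |f w| ^ p) / 2 ^ p := by
          apply add_le_add
          · rw [Real.div_rpow (abs_nonneg _) hc0.le]
            apply div_le_self (Real.rpow_nonneg (abs_nonneg _) p)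
            have h1c : (1:ℝ) ≤ c := by
              show (1:ℝ) ≤ ((B.card : ℕ) : ℝ)
              exact_mod_cast gBall_card_pos G v k.1
            exact Real.one_le_rpow h1c hp0.le
          · rcases Finset.eq_empty_or_nonempty (B.erase v) with he | ⟨w0, hw0⟩
            · rw [he]; simpa using div_nonneg hS h2p.le
            · have h2c : (2:ℝ) ≤ c := by
                have h1B : 1 < B.card := Finset.one_lt_card.mpr
                  ⟨v, hvB, w0, Finset.mem_of_mem_erase hw0,
                    fun h => (Finset.mem_erase.mp hw0).1 h.symm⟩
                show (2:ℝ) ≤ ((B.card : ℕ) : ℝ)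
                exact_mod_cast h1B
              have h2cp : (2:ℝ) ^ p ≤ c ^ p :=
                Real.rpow_le_rpow (by norm_num) h2c hp0.le
              rw [Finset.sum_div]
              calc ∑ w ∈ B.erase v, (|f w| / c) ^ p
                  ≤ ∑ w ∈ B.erase v, |f w| ^ p / 2 ^ p := by
                    apply Finset.sum_le_sum
                    intro w _
                    rw [Real.div_rpow (abs_nonneg _) hc0.le]
                    exact div_le_div_of_nonneg_left (Real.rpow_nonneg (abs_nonneg _) p)
                      h2p h2cp
                _ ≤ ∑ w ∈ Finset.univ.erase v, |f w| ^ p / 2 ^ p := by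
                    apply Finset.sum_le_sum_of_subset_of_nonneg
                    · exact Finset.erase_subset_erase v (Finset.subset_univ B)
                    · intro w _ _
                      exact div_nonneg (Real.rpow_nonneg (abs_nonneg _) p) h2p.le
  calc (∑ w ∈ B, |f w|) / c = (((∑ w ∈ B, |f w|) / c) ^ p) ^ (1/p) := by
        rw [← Real.rpow_mul havg, mul_one_div_cancel hp0.ne', Real.rpow_one]
    _ ≤ (|f v| ^ p + (∑ w ∈ Finset.univ.erase v, |f w| ^ p) / 2 ^ p) ^ (1/p) :=
        Real.rpow_le_rpow (Real.rpow_nonneg havg p) key (by positivity)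

lemma maxOp_nonneg [Nonempty V] (G : SimpleGraph V) (f : V → ℝ) (v : V) :
    0 ≤ maxOp G f v := by
  have h := le_ciSup
    (f := fun k : Fin (Fintype.card V) =>
      (∑ w ∈ gBall G v k.1, |f w|) / ((gBall G v k.1).card : ℝ))
    (Set.Finite.bddAbove (Set.finite_range _))
    (⟨0, Fintype.card_pos⟩ : Fin (Fintype.card V))
  have h0 : (0:ℝ) ≤ (∑ w ∈ gBall G v (0:ℕ), |f w|) / ((gBall G v (0:ℕ)).card : ℝ) :=
    div_nonneg (Finset.sum_nonneg fun w _ => abs_nonneg _) (Nat.cast_nonneg _)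
  exact h0.trans h

lemma pNorm_pos {p : ℝ} (hp0 : 0 < p) {f : V → ℝ} (hf : f ≠ 0) : 0 < pNorm p f := by
  obtain ⟨v0, hv0⟩ : ∃ v, f v ≠ 0 := by
    by_contra h
    push_neg at h
    exact hf (funext h)
  refine Real.rpow_pos_of_pos ?_ _
  exact Finset.sum_pos' (fun v _ => Real.rpow_nonneg (abs_nonneg _) p)
    ⟨v0, Finset.mem_univ v0, Real.rpow_pos_of_pos (abs_pos.mpr hv0) p⟩

lemma pNorm_maxOp_le [Nonempty V] {p : ℝ} (hp0 : 0 < p) (hp1 : p ≤ 1)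
    (G : SimpleGraph V) (f : V → ℝ) :
    pNorm p (maxOp G f) ≤
      (1 + ((Fintype.card V : ℝ) - 1) / 2 ^ p) ^ (1 / p) * pNorm p f := by
  have h2p : (0:ℝ) < 2 ^ p := Real.rpow_pos_of_pos (by norm_num) p
  set T : ℝ := ∑ v : V, |f v| ^ p with hT
  have hTnn : 0 ≤ T := Finset.sum_nonneg fun v _ => Real.rpow_nonneg (abs_nonneg _) p
  have hn1 : (1:ℝ) ≤ (Fintype.card V : ℝ) := by exact_mod_cast Fintype.card_pos
  have hCnn : (0:ℝ) ≤ 1 + ((Fintype.card V : ℝ) - 1) / 2 ^ p := by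
    have : (0:ℝ) ≤ ((Fintype.card V : ℝ) - 1) / 2 ^ p :=
      div_nonneg (by linarith) h2p.le
    linarith
  have hsum : ∑ v : V, |maxOp G f v| ^ p ≤ (1 + ((Fintype.card V : ℝ) - 1) / 2 ^ p) * T := by
    have step : ∀ v : V, |maxOp G f v| ^ p
        ≤ |f v| ^ p + (∑ w ∈ Finset.univ.erase v, |f w| ^ p) / 2 ^ p := by
      intro v
      have hX : 0 ≤ |f v| ^ p + (∑ w ∈ Finset.univ.erase v, |f w| ^ p) / 2 ^ p := by
        apply add_nonneg (Real.rpow_nonneg (abs_nonneg _) p)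
        exact div_nonneg (Finset.sum_nonneg fun w _ => Real.rpow_nonneg (abs_nonneg _) p) h2p.le
      rw [abs_of_nonneg (maxOp_nonneg G f v)]
      calc (maxOp G f v) ^ p
          ≤ ((|f v| ^ p + (∑ w ∈ Finset.univ.erase v, |f w| ^ p) / 2 ^ p) ^ (1/p)) ^ p :=
            Real.rpow_le_rpow (maxOp_nonneg G f v) (maxOp_le_aux hp0 hp1 G f v) hp0.le
        _ = |f v| ^ p + (∑ w ∈ Finset.univ.erase v, |f w| ^ p) / 2 ^ p := by
            rw [← Real.rpow_mul hX, one_div_mul_cancel hp0.ne', Real.rpow_one]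
    calc ∑ v : V, |maxOp G f v| ^ p
        ≤ ∑ v : V, (|f v| ^ p + (∑ w ∈ Finset.univ.erase v, |f w| ^ p) / 2 ^ p) :=
          Finset.sum_le_sum fun v _ => step v
      _ = (1 + ((Fintype.card V : ℝ) - 1) / 2 ^ p) * T := by
          rw [Finset.sum_add_distrib, ← Finset.sum_div]
          have : ∀ v : V, ∑ w ∈ Finset.univ.erase v, |f w| ^ p = T - |f v| ^ p := fun v =>
            Finset.sum_erase_eq_sub (Finset.mem_univ v)
          rw [Finset.sum_congr rfl fun v _ => this v, Finset.sum_sub_distrib,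
            Finset.sum_const, Finset.card_univ, nsmul_eq_mul]
          field_simp
          ring
  calc pNorm p (maxOp G f) = (∑ v : V, |maxOp G f v| ^ p) ^ (1/p) := rfl
    _ ≤ ((1 + ((Fintype.card V : ℝ) - 1) / 2 ^ p) * T) ^ (1/p) :=
        Real.rpow_le_rpow (Finset.sum_nonneg fun v _ => Real.rpow_nonneg (abs_nonneg _) p)
          hsum (by positivity)
    _ = (1 + ((Fintype.card V : ℝ) - 1) / 2 ^ p) ^ (1/p) * T ^ (1/p) :=
        Real.mul_rpow hCnn hTnn
    _ = (1 + ((Fintype.card V : ℝ) - 1) / 2 ^ p) ^ (1/p) * pNorm p f := rfl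

lemma kdelta_ne_zero (k : V) : kdelta k ≠ (0 : V → ℝ) := by
  intro h
  have := congrFun h k
  simp [kdelta] at this

lemma pNorm_kdelta {p : ℝ} (hp0 : 0 < p) (k : V) : pNorm p (kdelta (V := V) k) = 1 := by
  unfold pNorm
  have : ∀ v : V, |kdelta k v| ^ p = if v = k then 1 else 0 := by
    intro v
    by_cases h : v = k <;> simp [kdelta, h, Real.zero_rpow hp0.ne']
  rw [Finset.sum_congr rfl fun v _ => this v, Finset.sum_ite_eq' Finset.univ k fun _ => (1:ℝ)]
  simp


/-- optimal bounds for the ℓ^p norm of the maximal operator of an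
arbitrary connected graph, for 0 < p ≤ 1. -/
theorem stmt8 (n : ℕ) (G : SimpleGraph (Fin n)) (hG : G.Connected)
    (p : ℝ) (hp0 : 0 < p) (hp1 : p ≤ 1) :
    (1 + ((n : ℝ) - 1) / (n : ℝ) ^ p) ^ (1 / p) ≤ opNorm G p ∧
    opNorm G p ≤ (1 + ((n : ℝ) - 1) / 2 ^ p) ^ (1 / p) := by
  haveI : Nonempty (Fin n) := hG.nonempty
  have hn : 1 ≤ n := Nat.one_le_iff_ne_zero.mpr (by rintro rfl; exact (Fin.pos_iff_nonempty.mpr ‹_›).ne' rfl)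
  have hn1 : (1:ℝ) ≤ (n:ℝ) := by exact_mod_cast hn
  have h2p : (0:ℝ) < 2 ^ p := Real.rpow_pos_of_pos (by norm_num) p
  have hnp : (0:ℝ) < (n:ℝ) ^ p := Real.rpow_pos_of_pos (by linarith) p
  have hcard : Fintype.card (Fin n) = n := Fintype.card_fin n
  set C : ℝ := (1 + ((n : ℝ) - 1) / 2 ^ p) ^ (1 / p) with hC
  -- per-function upper bound on the ratio
  have hub : ∀ g : {f : Fin n → ℝ // f ≠ 0},
      pNorm p (maxOp G g.1) / pNorm p g.1 ≤ C := by
    intro g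
    rw [div_le_iff₀ (pNorm_pos hp0 g.2)]
    have := pNorm_maxOp_le hp0 hp1 G g.1
    rwa [hcard] at this
  have hbdd : BddAbove (Set.range fun g : {f : Fin n → ℝ // f ≠ 0} =>
      pNorm p (maxOp G g.1) / pNorm p g.1) := by
    refine ⟨C, ?_⟩
    rintro x ⟨g, rfl⟩
    exact hub g
  haveI : Nonempty {f : Fin n → ℝ // f ≠ 0} :=
    ⟨⟨kdelta (Classical.arbitrary (Fin n)), kdelta_ne_zero _⟩⟩
  constructor
  · -- lower bound via kdelta
    set k₀ : Fin n := Classical.arbitrary (Fin n) with hk₀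
    set f : Fin n → ℝ := kdelta k₀ with hf
    -- maxOp at k₀ is ≥ 1
    have hball0 : gBall G k₀ 0 = {k₀} := by
      ext w
      simp only [gBall, Finset.mem_filter, Finset.mem_univ, true_and, Finset.mem_singleton,
        Nat.le_zero]
      rw [hG.dist_eq_zero_iff]
      exact comm
    have hMk : (1:ℝ) ≤ maxOp G f k₀ := by
      have h := le_ciSup
        (f := fun k : Fin (Fintype.card (Fin n)) =>
          (∑ w ∈ gBall G k₀ k.1, |f w|) / ((gBall G k₀ k.1).card : ℝ))
        (Set.Finite.bddAbove (Set.finite_range _))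
        (⟨0, Fintype.card_pos⟩ : Fin (Fintype.card (Fin n)))
      refine le_trans (le_of_eq ?_) h
      show (1:ℝ) = (∑ w ∈ gBall G k₀ (0:ℕ), |f w|) / ((gBall G k₀ (0:ℕ)).card : ℝ)
      rw [hball0]
      simp [hf, kdelta]
    -- maxOp at v ≠ k₀ is ≥ 1/n
    have hMv : ∀ v : Fin n, v ≠ k₀ → (1:ℝ) / n ≤ maxOp G f v := by
      intro v hv
      obtain ⟨w, hw, hlen⟩ := hG.exists_path_of_dist v k₀
      have hr : G.dist v k₀ < Fintype.card (Fin n) := hlen ▸ hw.length_lt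
      have h := le_ciSup
        (f := fun k : Fin (Fintype.card (Fin n)) =>
          (∑ w ∈ gBall G v k.1, |f w|) / ((gBall G v k.1).card : ℝ))
        (Set.Finite.bddAbove (Set.finite_range _))
        (⟨G.dist v k₀, hr⟩ : Fin (Fintype.card (Fin n)))
      refine le_trans ?_ h
      show (1:ℝ) / n ≤ (∑ w ∈ gBall G v (G.dist v k₀), |f w|) / ((gBall G v (G.dist v k₀)).card : ℝ)
      set B := gBall G v (G.dist v k₀) with hB
      have hk₀B : k₀ ∈ B := by simp [hB, gBall]
      have hc0 : (0:ℝ) < (B.card : ℝ) := by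
        exact_mod_cast Finset.card_pos.mpr ⟨k₀, hk₀B⟩
      have hcn : (B.card : ℝ) ≤ (n:ℝ) := by
        have h := Finset.card_le_univ B
        rw [hcard] at h
        exact_mod_cast h
      have hsum1 : (1:ℝ) ≤ ∑ w ∈ B, |f w| := by
        have := Finset.single_le_sum (f := fun w => |f w|)
          (fun w _ => abs_nonneg _) hk₀B
        simpa [hf, kdelta] using this
      calc (1:ℝ)/n ≤ 1/(B.card : ℝ) := one_div_le_one_div_of_le hc0 hcn
        _ ≤ (∑ w ∈ B, |f w|) / (B.card : ℝ) := by gcongr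
    have hsum : 1 + ((n:ℝ)-1)/(n:ℝ)^p ≤ ∑ v : Fin n, |maxOp G f v| ^ p := by
      have step : ∀ v : Fin n,
          (if v = k₀ then (1:ℝ) else ((1:ℝ)/n)^p) ≤ |maxOp G f v| ^ p := by
        intro v
        rw [abs_of_nonneg (maxOp_nonneg G f v)]
        by_cases h : v = k₀
        · subst h
          rw [if_pos rfl]
          exact Real.one_le_rpow hMk hp0.le
        · rw [if_neg h]
          exact Real.rpow_le_rpow (by positivity) (hMv v h) hp0.le
      calc 1 + ((n:ℝ)-1)/(n:ℝ)^p
          = ∑ v : Fin n, (if v = k₀ then (1:ℝ) else ((1:ℝ)/n)^p) := by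
            rw [← Finset.add_sum_erase Finset.univ _ (Finset.mem_univ k₀), if_pos rfl]
            have hcongr : ∀ v ∈ Finset.univ.erase k₀,
                (if v = k₀ then (1:ℝ) else ((1:ℝ)/n)^p) = ((1:ℝ)/n)^p := by
              intro v hv
              rw [if_neg (Finset.mem_erase.mp hv).1]
            rw [Finset.sum_congr rfl hcongr, Finset.sum_const,
              Finset.card_erase_of_mem (Finset.mem_univ _), Finset.card_univ, hcard,
              nsmul_eq_mul, Nat.cast_sub hn, Nat.cast_one,
              Real.div_rpow zero_le_one (Nat.cast_nonneg n), Real.one_rpow]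
            ring
        _ ≤ ∑ v : Fin n, |maxOp G f v| ^ p := Finset.sum_le_sum fun v _ => step v
    have hD : (0:ℝ) ≤ 1 + ((n:ℝ)-1)/(n:ℝ)^p := by
      have : (0:ℝ) ≤ ((n:ℝ)-1)/(n:ℝ)^p := div_nonneg (by linarith) hnp.le
      linarith
    have hlb : (1 + ((n:ℝ)-1)/(n:ℝ)^p)^(1/p) ≤ pNorm p (maxOp G f) :=
      Real.rpow_le_rpow hD hsum (by positivity)
    refine le_trans ?_ (le_ciSup hbdd ⟨f, kdelta_ne_zero k₀⟩)
    show (1 + ((n:ℝ)-1)/(n:ℝ)^p)^(1/p) ≤ pNorm p (maxOp G f) / pNorm p f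
    rw [hf, pNorm_kdelta hp0 k₀, div_one]
    rw [← hf]
    exact hlb
  · exact ciSup_le hub
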